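/- Let n ≥ 2 and let F ⊆ S_n be an intersecting family of permutations with |F| = (n-1)!. Then there exist i, j ∈ [n] such that F = {σ ∈ S_n : σ(i) = j}. -/

import Mathlib

/-
Call `σ` and `τ` disagreeing if `σ i ≠ τ i` for every `i`. If `C` is a set of pairwise disagreeing
permutations and `B` is intersecting, then `(γ, β) ↦ γ⁻¹ * β` is injective on `C × B`, so
`|C| |B| ≤ n!`. When `|C| = n` and `|B| = (n - 1)!` it is a bijection, so `C` meets `B`; and by
Hall's theorem every pairwise disagreeing set extends to one of size `n` (Latin rectangles
complete to Latin squares).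

Translate `B` so that it contains the identity. The rows of an idempotent Latin square form a
sharply transitive set whose members each fix exactly one point, so some `ρ ∈ B` fixes only `a`.
If some `σ ∈ B` moves `a`, choose `x ≠ a` moved by `σ` and a permutation `e` fixing exactly `a` and
`x` that disagrees with `σ` (Hall's theorem for `n ≥ 6`, explicit for `n = 4, 5`). Extend
`{swap a x, e}` to a sharply transitive set and let `γ` be its member in `B`: `γ` is neither
`swap a x` (which disagrees with `ρ`) nor `e` (which disagrees with `σ`), so it disagrees with both,
and since their fixed points cover everything, `γ` is a derangement, contradicting `1 ∈ B`. Hence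
`B` lies in a point stabiliser, which it fills by counting. For `n ≤ 3` the family has at most two
members and the claim is immediate.
-/

open Finset Function

namespace Finset

theorem exists_injective_of_le_card_of_card_filter_le {ι β : Type*} [Fintype ι]
    [DecidableEq β] (t : ι → Finset β) {d : ℕ} (hd : 0 < d) (ht : ∀ i, d ≤ #(t i))
    (hb : ∀ b, #{i | b ∈ t i} ≤ d) : ∃ f : ι → β, Injective f ∧ ∀ i, f i ∈ t i := by
  refine (all_card_le_biUnion_card_iff_exists_injective t).1 fun s => ?_
  refine Nat.le_of_mul_le_mul_right (card_mul_le_card_mul (fun i b => b ∈ t i) ?_ ?_) hd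
  · intro i hi
    exact (ht i).trans <| card_le_card fun b hb => mem_filter.2 ⟨mem_biUnion.2 ⟨i, hi, hb⟩, hb⟩
  · intro b _
    exact (card_le_card (filter_subset_filter _ (subset_univ s))).trans (hb b)

end Finset

namespace Equiv.Perm

variable {α : Type*}

def Disagree (σ τ : Perm α) : Prop := ∀ i, σ i ≠ τ i

theorem Disagree.symm {σ τ : Perm α} (h : Disagree σ τ) : Disagree τ σ :=
  fun i => (h i).symm

def IsIntersecting (F : Finset (Perm α)) : Prop := ∀ σ ∈ F, ∀ τ ∈ F, ∃ i, σ i = τ i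

theorem IsIntersecting.not_disagree {F : Finset (Perm α)} (hF : IsIntersecting F) {σ τ : Perm α}
    (hσ : σ ∈ F) (hτ : τ ∈ F) : ¬Disagree σ τ := by
  obtain ⟨i, hi⟩ := hF σ hσ τ hτ
  exact fun h => h i hi

theorem _root_.Set.Pairwise.injOn_apply {C : Finset (Perm α)}
    (hC : (C : Set (Perm α)).Pairwise Disagree) (i : α) : Set.InjOn (fun γ : Perm α => γ i) C := by
  intro γ hγ γ' hγ' h
  by_contra hne
  exact hC hγ hγ' hne i h

def IsIdempotentLatinSquare (R : α → Perm α) : Prop :=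
  (∀ a, R a a = a) ∧ Pairwise fun a b => Disagree (R a) (R b)

namespace IsIdempotentLatinSquare

variable {R : α → Perm α}

theorem apply_eq_self_iff (hR : IsIdempotentLatinSquare R) {a i : α} : R a i = i ↔ i = a := by
  refine ⟨fun h => ?_, fun h => h ▸ hR.1 i⟩
  by_contra hia
  exact hR.2 (Ne.symm hia) i (h.trans (hR.1 i).symm)

theorem injective (hR : IsIdempotentLatinSquare R) : Injective R := by
  intro a b h
  by_contra hab
  exact hR.2 hab a (by rw [h])

theorem permCongr {β : Type*} (hR : IsIdempotentLatinSquare R) (e : α ≃ β) :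
    IsIdempotentLatinSquare fun b => e.permCongr (R (e.symm b)) := by
  refine ⟨fun b => by simp [hR.1], fun b b' hbb' i h => ?_⟩
  simp only [permCongr_apply, EmbeddingLike.apply_eq_iff_eq] at h
  exact hR.2 (e.symm.injective.ne hbb') _ h

end IsIdempotentLatinSquare

section HalfSum

variable {K : Type*} [CommRing K] [Invertible (2 : K)]

def halfSum (a : K) : Perm K where
  toFun i := ⅟2 * (a + i)
  invFun j := 2 * j - a
  left_inv i := by simp
  right_inv j := by simp

theorem halfSum_apply (a i : K) : halfSum a i = ⅟2 * (a + i) := rfl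

theorem isIdempotentLatinSquare_halfSum : IsIdempotentLatinSquare (halfSum (K := K)) := by
  refine ⟨fun a => by rw [halfSum_apply, ← two_mul, invOf_mul_cancel_left], fun a b hab i h => ?_⟩
  have := congrArg (2 * ·) h
  simp only [halfSum_apply, mul_invOf_cancel_left, add_left_inj] at this
  exact hab this

end HalfSum

section Prolong

variable [DecidableEq α]

/-- The prolongation of the Latin square `R` along the transversal `{(r, τ r)}` with distinct
entries `φ r = R r (τ r)`: each entry of the transversal moves to the new column `none`, the new row
`none` collects them, and the transversal cells receive the new symbol `none`. -/
def prolong (R : α → Perm α) (τ φ : Perm α) : Option α → Perm (Option α)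
  | some r => swap none (some (φ r)) * optionCongr (R r)
  | none => optionCongr (φ * τ⁻¹)

variable {R : α → Perm α} {τ φ : Perm α}

theorem prolong_some_some (hφ : ∀ r, R r (τ r) = φ r) (r c : α) :
    prolong R τ φ (some r) (some c) = if c = τ r then none else some (R r c) := by
  simp only [prolong, mul_apply, optionCongr_apply, Option.map_some]
  split_ifs with hc
  · rw [hc, hφ, swap_apply_right]
  · refine swap_apply_of_ne_of_ne (Option.some_ne_none _) ?_
    rw [Ne, Option.some_inj, ← hφ]
    exact (R r).injective.ne hc

theorem prolong_some_none (r : α) : prolong R τ φ (some r) none = some (φ r) := by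
  simp [prolong]

theorem prolong_none_some (c : α) : prolong R τ φ none (some c) = some (φ (τ⁻¹ c)) := by
  simp [prolong]

theorem IsIdempotentLatinSquare.disagree_prolong_some_none (hR : IsIdempotentLatinSquare R)
    (hφ : ∀ r, R r (τ r) = φ r) (r : α) : Disagree (prolong R τ φ (some r)) (prolong R τ φ none)
  | none => by simp [prolong]
  | some c => by
    rw [prolong_some_some hφ, prolong_none_some]
    split_ifs with hc
    · exact (Option.some_ne_none _).symm
    · rw [Ne, Option.some_inj, ← hφ, Perm.coe_inv, apply_symm_apply]
      refine hR.2 ?_ c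
      rintro rfl
      exact hc (apply_symm_apply τ c).symm

theorem IsIdempotentLatinSquare.prolong (hR : IsIdempotentLatinSquare R) (hτ : ∀ r, τ r ≠ r)
    (hφ : ∀ r, R r (τ r) = φ r) : IsIdempotentLatinSquare (prolong R τ φ) := by
  refine ⟨fun o => ?_, fun o o' hoo' => ?_⟩
  · cases o with
    | none => rfl
    | some r => rw [prolong_some_some hφ, if_neg (hτ r).symm, hR.1]
  cases o with
  | none =>
    cases o' with
    | none => exact absurd rfl hoo'
    | some r => exact (hR.disagree_prolong_some_none hφ r).symm
  | some r =>
    cases o' with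
    | none => exact hR.disagree_prolong_some_none hφ r
    | some s =>
      have hrs : r ≠ s := fun h => hoo' (h ▸ rfl)
      rintro (_ | c)
      · simpa [prolong_some_none] using φ.injective.ne hrs
      · rw [prolong_some_some hφ, prolong_some_some hφ]
        split_ifs with hr hs hs
        · exact absurd (τ.injective (hr.symm.trans hs)) hrs
        · exact (Option.some_ne_none _).symm
        · exact Option.some_ne_none _
        · exact Option.some_injective _ |>.ne (hR.2 hrs c)

end Prolong

theorem exists_isIdempotentLatinSquare [Fintype α] (hα : 3 ≤ Fintype.card α) :
    ∃ R : α → Perm α, IsIdempotentLatinSquare R := by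
  have invertibleTwo : ∀ m : ℕ, Odd m → Invertible (2 : ZMod m) := fun m hm =>
    invertibleOfRightInverse _ ((m + 1) / 2 : ℕ) <| by
      rw [← Nat.cast_ofNat, ← Nat.cast_mul, Nat.two_mul_div_two_of_even hm.add_one, Nat.cast_add,
        ZMod.natCast_self, zero_add, Nat.cast_one]
  rcases Nat.even_or_odd (Fintype.card α) with hev | hodd
  -- prolong the square of odd order `m` along `{(r, r + 1)}`, whose entries `r + 1/2` are distinct
  · obtain ⟨m, hm⟩ : ∃ m, Fintype.card α = m + 1 := ⟨_, (Nat.sub_add_cancel (by omega)).symm⟩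
    have : NeZero m := ⟨by omega⟩
    have : Fact (1 < m) := ⟨by omega⟩
    let := invertibleTwo m (Nat.not_even_iff_odd.1 (Nat.even_add_one.1 (hm ▸ hev)))
    have hφ : ∀ r : ZMod m, halfSum r (Equiv.addRight 1 r) = Equiv.addRight ⅟2 r := fun r => by
      rw [halfSum_apply, coe_addRight, coe_addRight, ← add_assoc, ← two_mul, mul_add,
        invOf_mul_cancel_left, mul_one]
    exact ⟨_, (isIdempotentLatinSquare_halfSum.prolong (τ := Equiv.addRight 1)
      (by simp) hφ).permCongr (Fintype.equivOfCardEq (by simp [hm]))⟩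
  · have : NeZero (Fintype.card α) := ⟨by omega⟩
    let := invertibleTwo _ hodd
    exact ⟨_, isIdempotentLatinSquare_halfSum.permCongr
      (Fintype.equivOfCardEq (ZMod.card (Fintype.card α)))⟩

section DecidableEq

variable [DecidableEq α]

theorem exists_forall_apply_notMem_of_card_filter_le_two {β : Type*} [Fintype β] [DecidableEq β]
    (hβ : 4 ≤ Fintype.card β) (F : β → Finset β) (hF : ∀ y, #(F y) ≤ 2)
    (hF' : ∀ v, #{y | v ∈ F y} ≤ 2) : ∃ e : Perm β, ∀ y, e y ∉ F y := by
  suffices hall : ∀ P : Finset β, #P ≤ #(P.biUnion fun y => (F y)ᶜ) by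
    obtain ⟨f, hf, hfF⟩ := (all_card_le_biUnion_card_iff_exists_injective _).1 hall
    exact ⟨ofBijective f (Finite.injective_iff_bijective.1 hf), fun y => mem_compl.1 (hfF y)⟩
  intro P
  rcases le_or_gt #P 2 with hP | hP
  · obtain rfl | ⟨y, hy⟩ := P.eq_empty_or_nonempty
    · simp
    calc #P ≤ #(F y)ᶜ := by rw [card_compl]; have := hF y; omega
      _ ≤ _ := card_le_card (subset_biUnion_of_mem (fun y => (F y)ᶜ) hy)
  · -- each value is forbidden at most twice, so any three rows together allow every value
    have huniv : P.biUnion (fun y => (F y)ᶜ) = univ := by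
      refine eq_univ_of_forall fun v => ?_
      obtain ⟨y, hy, hvy⟩ := exists_mem_notMem_of_card_lt_card
        ((card_le_card (filter_subset_filter _ (subset_univ P))).trans (hF' v) |>.trans_lt hP)
      exact mem_biUnion.2 ⟨y, hy, mem_compl.2 fun h => hvy (mem_filter.2 ⟨hy, h⟩)⟩
    rw [huniv]
    exact card_le_univ P

def DerangesAvoiding (S : Finset α) (σ e : Perm α) : Prop :=
  (∀ y ∉ S, e y = y) ∧ ∀ y ∈ S, e y ≠ y ∧ e y ≠ σ y

theorem exists_derangesAvoiding_of_four_le_card (σ : Perm α) {S : Finset α} (hS : 4 ≤ #S) :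
    ∃ e, DerangesAvoiding S σ e := by
  obtain ⟨e, he⟩ := exists_forall_apply_notMem_of_card_filter_le_two (β := S) (by simpa using hS)
    (fun y => ({y.1, σ y.1} : Finset α).subtype (· ∈ S))
    (fun y => by rw [card_subtype]; exact (card_filter_le _ _).trans card_le_two)
    (fun v => by
      refine (card_le_card (t := ({v.1, σ⁻¹ v.1} : Finset α).subtype (· ∈ S)) fun y hy => ?_).trans
        ((card_subtype _ _).trans_le ((card_filter_le _ _).trans card_le_two))
      simp only [mem_filter, mem_univ, true_and, mem_subtype, mem_insert, mem_singleton] at hy ⊢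
      rcases hy with h | h
      · exact Or.inl h.symm
      · exact Or.inr (by rw [h]; simp))
  refine ⟨ofSubtype e, fun y hy => ofSubtype_apply_of_not_mem e hy, fun y hy => ?_⟩
  have := he ⟨y, hy⟩
  simp only [mem_subtype, mem_insert, mem_singleton, not_or] at this
  rw [ofSubtype_apply_of_mem e hy]
  exact this

theorem derangesAvoiding_swap {σ : Perm α} {p q : α} (hpq : p ≠ q) (hp : σ p = p) :
    DerangesAvoiding {p, q} σ (swap p q) := by
  refine ⟨fun y hy => ?_, fun y hy => ?_⟩
  · simp only [mem_insert, mem_singleton, not_or] at hy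
    exact swap_apply_of_ne_of_ne hy.1 hy.2
  · rcases mem_insert.1 hy with rfl | hy
    · rw [swap_apply_left, hp]; exact ⟨hpq.symm, hpq.symm⟩
    · rw [mem_singleton.1 hy, swap_apply_right]
      exact ⟨hpq, fun h => hpq (σ.injective (hp.trans h))⟩

theorem derangesAvoiding_swap_mul_swap {σ : Perm α} {p q r : α} (hpq : p ≠ q) (hpr : p ≠ r)
    (hqr : q ≠ r) (hp : σ p = p) (hq : σ q ≠ r) :
    DerangesAvoiding {p, q, r} σ (swap p q * swap q r) := by
  refine ⟨fun y hy => ?_, fun y hy => ?_⟩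
  · simp only [mem_insert, mem_singleton, not_or] at hy
    rw [mul_apply, swap_apply_of_ne_of_ne hy.2.1 hy.2.2, swap_apply_of_ne_of_ne hy.1 hy.2.1]
  · simp only [mem_insert, mem_singleton] at hy
    rcases hy with rfl | rfl | rfl
    · rw [mul_apply, swap_apply_of_ne_of_ne hpq hpr, swap_apply_left, hp]
      exact ⟨hpq.symm, hpq.symm⟩
    · rw [mul_apply, swap_apply_left, swap_apply_of_ne_of_ne hpr.symm hqr.symm]
      exact ⟨hqr.symm, hq.symm⟩
    · rw [mul_apply, swap_apply_right, swap_apply_right]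
      exact ⟨hpr, fun h => hpr (σ.injective (hp.trans h))⟩

theorem disagree_swap_of_forall_apply_eq_self_iff {ρ : Perm α} {a x : α}
    (hρ : ∀ i, ρ i = i ↔ i = a) (hxa : x ≠ a) : Disagree (swap a x) ρ := fun i => by
  rcases eq_or_ne i a with rfl | hia
  · rw [swap_apply_left, (hρ i).2 rfl]; exact hxa
  rcases eq_or_ne i x with rfl | hix
  · rw [swap_apply_right]; exact fun h => hxa (ρ.injective (by rw [← h, (hρ a).2 rfl]))
  · rw [swap_apply_of_ne_of_ne hia hix]; exact fun h => hia ((hρ i).1 h.symm)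

end DecidableEq

section Finite

variable [Fintype α] [DecidableEq α]

theorem isIntersecting_filter_apply_eq (i j : α) : IsIntersecting {σ : Perm α | σ i = j} := by
  intro σ hσ τ hτ
  exact ⟨i, (mem_filter.1 hσ).2.trans (mem_filter.1 hτ).2.symm⟩

theorem IsIntersecting.image_mul_right {F : Finset (Perm α)} (hF : IsIntersecting F) (g : Perm α) :
    IsIntersecting (F.image (· * g)) := by
  simp only [IsIntersecting, mem_image, forall_exists_index, and_imp, forall_apply_eq_imp_iff₂]
  intro σ hσ τ hτ
  obtain ⟨i, hi⟩ := hF σ hσ τ hτ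
  exact ⟨g⁻¹ i, by simpa using hi⟩

theorem IsIntersecting.injOn_inv_mul {B C : Finset (Perm α)} (hB : IsIntersecting B)
    (hC : (C : Set (Perm α)).Pairwise Disagree) :
    Set.InjOn (fun p : Perm α × Perm α => p.1⁻¹ * p.2) (C ×ˢ B : Finset _) := by
  rintro ⟨γ, β⟩ hγβ ⟨γ', β'⟩ hγβ' h
  simp only [coe_product, Set.mem_prod, mem_coe] at hγβ hγβ' h
  obtain ⟨i, hi⟩ := hB β hγβ.2 β' hγβ'.2
  have hβ : β = γ * (γ'⁻¹ * β') := by rw [← h, mul_inv_cancel_left]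
  have hγ : γ = γ' := by
    by_contra hne
    refine hC hγβ.1 hγβ'.1 hne ((γ'⁻¹ * β') i) ?_
    rw [← mul_apply, ← hβ, hi]
    simp
  subst hγ
  simp [hβ]

/-- The clique–coclique bound in the derangement graph. -/
theorem IsIntersecting.card_mul_card_le {B C : Finset (Perm α)} (hB : IsIntersecting B)
    (hC : (C : Set (Perm α)).Pairwise Disagree) : #C * #B ≤ (Fintype.card α).factorial := by
  rw [← card_product, ← Fintype.card_perm, ← card_univ]
  exact card_le_card_of_injOn _ (fun _ _ => mem_coe.2 (mem_univ _)) (hB.injOn_inv_mul hC)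

theorem IsIntersecting.exists_mem_of_card_mul_card_eq {B C : Finset (Perm α)}
    (hB : IsIntersecting B) (hC : (C : Set (Perm α)).Pairwise Disagree)
    (hcard : #C * #B = (Fintype.card α).factorial) : ∃ γ ∈ C, γ ∈ B := by
  have himage : (C ×ˢ B).image (fun p : Perm α × Perm α => p.1⁻¹ * p.2) = univ := by
    refine eq_univ_of_card _ ?_
    rw [card_image_of_injOn (hB.injOn_inv_mul hC), card_product, hcard, Fintype.card_perm]
  obtain ⟨⟨γ, β⟩, hγβ, h⟩ := mem_image.1 (himage ▸ mem_univ (1 : Perm α))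
  rw [mem_product] at hγβ
  dsimp only at hγβ h
  exact ⟨γ, hγβ.1, inv_mul_eq_one.1 h ▸ hγβ.2⟩

/-- Completing a Latin rectangle by one row: the bipartite graph "position `i` may take value `v`"
is regular, so Hall's condition holds. -/
theorem exists_forall_disagree_of_card_lt {C : Finset (Perm α)}
    (hC : (C : Set (Perm α)).Pairwise Disagree) (hlt : #C < Fintype.card α) :
    ∃ τ : Perm α, ∀ γ ∈ C, Disagree τ γ := by
  set t : α → Finset α := fun i => (C.image fun γ => γ i)ᶜ
  have hcount : ∀ v, ({i | v ∈ t i} : Finset α) = (C.image fun γ => γ⁻¹ v)ᶜ := by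
    intro v
    ext i
    simp [t, Equiv.symm_apply_eq, @eq_comm _ v]
  have hinv : ∀ v, Set.InjOn (fun γ : Perm α => γ⁻¹ v) C := fun v γ hγ γ' hγ' h =>
    hC.injOn_apply (γ⁻¹ v) hγ hγ' (by simp only at h ⊢; nth_rw 2 [h]; simp)
  obtain ⟨f, hf, hft⟩ := exists_injective_of_le_card_of_card_filter_le t (d := Fintype.card α - #C)
    (by omega) (fun i => by rw [card_compl, card_image_of_injOn (hC.injOn_apply i)])
    (fun v => by rw [hcount, card_compl, card_image_of_injOn (hinv v)])
  refine ⟨ofBijective f (Finite.injective_iff_bijective.1 hf), fun γ hγ i h => ?_⟩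
  exact mem_compl.1 (hft i) (mem_image.2 ⟨γ, hγ, h.symm⟩)


theorem exists_superset_pairwise_disagree_card_eq {C : Finset (Perm α)}
    (hC : (C : Set (Perm α)).Pairwise Disagree) (hle : #C ≤ Fintype.card α) :
    ∃ D, C ⊆ D ∧ (D : Set (Perm α)).Pairwise Disagree ∧ #D = Fintype.card α := by
  induction h : Fintype.card α - #C generalizing C with
  | zero => exact ⟨C, Subset.rfl, hC, by omega⟩
  | succ k ih =>
    obtain ⟨τ, hτ⟩ := exists_forall_disagree_of_card_lt hC (by omega)
    have hτC : τ ∉ C := by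
      intro hτC
      have : Nonempty α := Fintype.card_pos_iff.1 (by omega)
      exact hτ τ hτC (Classical.arbitrary α) rfl
    have hins : ((insert τ C : Finset (Perm α)) : Set (Perm α)).Pairwise Disagree := by
      rw [coe_insert, Set.pairwise_insert]
      exact ⟨hC, fun γ hγ _ => ⟨hτ γ hγ, (hτ γ hγ).symm⟩⟩
    obtain ⟨D, hCD, hD, hDcard⟩ := ih hins (by rw [card_insert_of_notMem hτC]; omega)
      (by rw [card_insert_of_notMem hτC]; omega)
    exact ⟨D, (subset_insert τ C).trans hCD, hD, hDcard⟩

theorem IsIntersecting.card_le [Nonempty α] {B : Finset (Perm α)} (hB : IsIntersecting B) :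
    #B ≤ (Fintype.card α - 1).factorial := by
  obtain ⟨C, -, hC, hCcard⟩ :=
    exists_superset_pairwise_disagree_card_eq (C := (∅ : Finset (Perm α))) (by simp) (by simp)
  have h := hB.card_mul_card_le hC
  rw [hCcard, ← Nat.mul_factorial_pred Fintype.card_ne_zero] at h
  exact Nat.le_of_mul_le_mul_left h Fintype.card_pos

theorem IsIntersecting.exists_mem_forall_disagree [Nonempty α] {B D : Finset (Perm α)}
    (hB : IsIntersecting B) (hcard : #B = (Fintype.card α - 1).factorial)
    (hD : (D : Set (Perm α)).Pairwise Disagree) (hDcard : #D ≤ Fintype.card α)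
    (hDB : ∀ δ ∈ D, ∃ β ∈ B, Disagree δ β) : ∃ γ ∈ B, ∀ δ ∈ D, Disagree γ δ := by
  obtain ⟨C, hDC, hC, hCcard⟩ := exists_superset_pairwise_disagree_card_eq hD hDcard
  obtain ⟨γ, hγC, hγB⟩ := hB.exists_mem_of_card_mul_card_eq hC
    (by rw [hCcard, hcard, Nat.mul_factorial_pred Fintype.card_ne_zero])
  refine ⟨γ, hγB, fun δ hδ => hC hγC (hDC hδ) ?_⟩
  rintro rfl
  obtain ⟨β, hβ, hγβ⟩ := hDB γ hδ
  exact hB.not_disagree hγB hβ hγβ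

theorem card_compl_pair {a x : α} (hax : a ≠ x) :
    #({a, x}ᶜ : Finset α) = Fintype.card α - 2 := by
  rw [card_compl, card_pair hax]

theorem mem_compl_pair_of_apply_eq_self {σ : Perm α} {a y₀ : α} (hσa : σ a ≠ a)
    (hy₀ : σ y₀ = y₀) : y₀ ∈ ({a, σ a}ᶜ : Finset α) := by
  simp only [mem_compl, mem_insert, mem_singleton, not_or]
  exact ⟨fun h => hσa (h ▸ hy₀), fun h => σ.injective.ne hσa (h ▸ hy₀)⟩

section DerangesAvoiding

variable {σ e : Perm α} {a x : α}

theorem DerangesAvoiding.apply_eq_self (he : DerangesAvoiding {a, x}ᶜ σ e) {i : α}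
    (hi : i = a ∨ i = x) : e i = i :=
  he.1 i (by rwa [mem_compl, not_not, mem_insert, mem_singleton])

theorem DerangesAvoiding.apply_eq_self_or (he : DerangesAvoiding {a, x}ᶜ σ e) (i : α) :
    e i = i ∨ swap a x i = i := by
  by_cases hi : i = a ∨ i = x
  · exact .inl (he.apply_eq_self hi)
  · simp only [not_or] at hi
    exact .inr (swap_apply_of_ne_of_ne hi.1 hi.2)

theorem DerangesAvoiding.disagree (he : DerangesAvoiding {a, x}ᶜ σ e) (hσa : σ a ≠ a)
    (hσx : σ x ≠ x) : Disagree e σ := fun i => by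
  by_cases hi : i = a ∨ i = x
  · rw [he.apply_eq_self hi]
    rcases hi with rfl | rfl
    exacts [hσa.symm, hσx.symm]
  · exact (he.2 i (by simpa using hi)).2

theorem DerangesAvoiding.disagree_swap (he : DerangesAvoiding {a, x}ᶜ σ e) (hxa : x ≠ a) :
    Disagree e (swap a x) := fun i => by
  by_cases hi : i = a ∨ i = x
  · rw [he.apply_eq_self hi]
    rcases hi with rfl | rfl
    · rw [swap_apply_left]; exact hxa.symm
    · rw [swap_apply_right]; exact hxa
  · simp only [not_or] at hi
    rw [swap_apply_of_ne_of_ne hi.1 hi.2]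
    exact (he.2 i (by simp [hi.1, hi.2])).1

end DerangesAvoiding

/-- A derangement of a three-element set `{y₀, q, r}` with `σ y₀ = y₀` avoiding `σ` exists unless
`σ` swaps `q` and `r`. -/
theorem exists_derangesAvoiding_compl_pair_of_card_eq_five (h5 : Fintype.card α = 5)
    {σ : Perm α} {a y₀ : α} (hσa : σ a ≠ a) (hy₀ : σ y₀ = y₀) :
    ∃ x, x ≠ a ∧ σ x ≠ x ∧ ∃ e, DerangesAvoiding {a, x}ᶜ σ e := by
  have hσσa : σ (σ a) ≠ σ a := σ.injective.ne hσa
  have hy₀S := mem_compl_pair_of_apply_eq_self hσa hy₀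
  obtain ⟨q, r, hqr, hqrS⟩ := card_eq_two.1 <| by
    rw [card_erase_of_mem hy₀S, card_compl_pair hσa.symm, h5]
  have hS : ({a, σ a}ᶜ : Finset α) = {y₀, q, r} := by rw [← hqrS, insert_erase hy₀S]
  have hq : q ∈ ({a, σ a}ᶜ : Finset α).erase y₀ := hqrS ▸ mem_insert_self q {r}
  have hr : r ∈ ({a, σ a}ᶜ : Finset α).erase y₀ := hqrS ▸ mem_insert_of_mem (mem_singleton_self r)
  simp only [mem_erase, mem_compl, mem_insert, mem_singleton, not_or] at hq hr hy₀S
  by_cases hσq : σ q = r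
  · by_cases hσr : σ r = q
    -- `σ` swaps `q` and `r`, so `x = σ a` fails; `x = q` works
    · refine ⟨q, hq.2.1, hσq ▸ hqr.symm, swap y₀ r * swap r (σ a), ?_⟩
      have hS' : ({a, q}ᶜ : Finset α) = {y₀, r, σ a} := by
        ext y
        have hy := congrArg (y ∈ ·) hS
        simp only [mem_compl, mem_insert, mem_singleton, not_or, eq_iff_iff] at hy ⊢
        grind
      rw [hS']
      refine derangesAvoiding_swap_mul_swap (Ne.symm hr.1) hy₀S.2 hr.2.2 hy₀ ?_
      rw [hσr]; exact hq.2.2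
    · refine ⟨σ a, hσa, hσσa, swap y₀ r * swap r q, ?_⟩
      rw [hS, pair_comm q r]
      exact derangesAvoiding_swap_mul_swap (Ne.symm hr.1) (Ne.symm hq.1) hqr.symm hy₀ hσr
  · exact ⟨σ a, hσa, hσσa, swap y₀ q * swap q r,
      hS ▸ derangesAvoiding_swap_mul_swap (Ne.symm hq.1) (Ne.symm hr.1) hqr hy₀ hσq⟩

theorem exists_derangesAvoiding_compl_pair (h4 : 4 ≤ Fintype.card α) {σ : Perm α} {a y₀ : α}
    (hσa : σ a ≠ a) (hy₀ : σ y₀ = y₀) :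
    ∃ x, x ≠ a ∧ σ x ≠ x ∧ ∃ e, DerangesAvoiding {a, x}ᶜ σ e := by
  have hσσa : σ (σ a) ≠ σ a := σ.injective.ne hσa
  rcases (by omega : Fintype.card α = 4 ∨ Fintype.card α = 5 ∨ 6 ≤ Fintype.card α)
    with h | h | h
  · have hy₀S := mem_compl_pair_of_apply_eq_self hσa hy₀
    obtain ⟨q, hq⟩ := card_eq_one.1 <| by
      rw [card_erase_of_mem hy₀S, card_compl_pair hσa.symm, h]
    have hqy₀ : y₀ ≠ q := fun h => by simpa [h] using hq.symm.subset (mem_singleton_self q)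
    refine ⟨σ a, hσa, hσσa, swap y₀ q, ?_⟩
    rw [← insert_erase hy₀S, hq]
    exact derangesAvoiding_swap hqy₀ hy₀
  · exact exists_derangesAvoiding_compl_pair_of_card_eq_five h hσa hy₀
  · exact ⟨σ a, hσa, hσσa,
      exists_derangesAvoiding_of_four_le_card σ (by rw [card_compl_pair hσa.symm]; omega)⟩

theorem IsIntersecting.exists_mem_apply_eq_self_iff {B : Finset (Perm α)}
    (h3 : 3 ≤ Fintype.card α) (hB : IsIntersecting B)
    (hcard : #B = (Fintype.card α - 1).factorial) : ∃ ρ ∈ B, ∃ a, ∀ i, ρ i = i ↔ i = a := by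
  obtain ⟨R, hR⟩ := exists_isIdempotentLatinSquare h3
  have : Nonempty α := Fintype.card_pos_iff.1 (by omega)
  obtain ⟨ρ, hρR, hρB⟩ := hB.exists_mem_of_card_mul_card_eq (C := univ.image R)
    (by
      simp only [coe_image, coe_univ, Set.image_univ]
      rintro _ ⟨a, rfl⟩ _ ⟨b, rfl⟩ hab
      exact hR.2 fun h => hab (h ▸ rfl))
    (by rw [card_image_of_injective _ hR.injective, card_univ, hcard,
      Nat.mul_factorial_pred Fintype.card_ne_zero])
  obtain ⟨a, -, rfl⟩ := mem_image.1 hρR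
  exact ⟨R a, hρB, a, fun i => hR.apply_eq_self_iff⟩

theorem IsIntersecting.exists_forall_apply_eq_self {B : Finset (Perm α)}
    (h4 : 4 ≤ Fintype.card α) (hB : IsIntersecting B)
    (hcard : #B = (Fintype.card α - 1).factorial) (h1 : 1 ∈ B) : ∃ a, ∀ σ ∈ B, σ a = a := by
  obtain ⟨ρ, hρ, a, hρa⟩ := hB.exists_mem_apply_eq_self_iff (by omega) hcard
  refine ⟨a, fun σ hσ => by_contra fun hσa => ?_⟩
  obtain ⟨y₀, hy₀⟩ := hB σ hσ 1 h1
  obtain ⟨x, hxa, hσx, e, he⟩ := exists_derangesAvoiding_compl_pair h4 hσa hy₀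
  have : Nonempty α := ⟨a⟩
  obtain ⟨γ, hγ, hγD⟩ := hB.exists_mem_forall_disagree hcard (D := {swap a x, e})
    (by
      rw [coe_pair]
      exact Set.pairwise_pair.2 fun _ => ⟨(he.disagree_swap hxa).symm, he.disagree_swap hxa⟩)
    (card_le_two.trans (by omega))
    (by simpa using ⟨⟨ρ, hρ, disagree_swap_of_forall_apply_eq_self_iff hρa hxa⟩,
      ⟨σ, hσ, he.disagree hσa hσx⟩⟩)
  refine hB.not_disagree hγ h1 fun i hi => ?_
  rcases he.apply_eq_self_or i with h | h
  · exact hγD e (by simp) i (by rw [h]; exact hi)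
  · exact hγD (swap a x) (by simp) i (by rw [h]; exact hi)

theorem IsIntersecting.exists_forall_apply_eq {B : Finset (Perm α)} (h4 : 4 ≤ Fintype.card α)
    (hB : IsIntersecting B) (hcard : #B = (Fintype.card α - 1).factorial) :
    ∃ i j, ∀ σ ∈ B, σ i = j := by
  obtain ⟨g, hg⟩ : B.Nonempty := card_pos.1 (hcard ▸ Nat.factorial_pos _)
  obtain ⟨a, ha⟩ := (hB.image_mul_right g⁻¹).exists_forall_apply_eq_self h4
    (by rw [card_image_of_injective _ (mul_left_injective _), hcard])
    (mem_image.2 ⟨g, hg, mul_inv_cancel g⟩)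
  exact ⟨g⁻¹ a, a, fun σ hσ => by simpa using ha _ (mem_image_of_mem _ hσ)⟩

theorem IsIntersecting.exists_forall_apply_eq_of_card_le_two [Nonempty α] {B : Finset (Perm α)}
    (hB : IsIntersecting B) (h2 : #B ≤ 2) : ∃ i j, ∀ σ ∈ B, σ i = j := by
  obtain rfl | ⟨σ, hσ⟩ := B.eq_empty_or_nonempty
  · exact ⟨Classical.arbitrary α, Classical.arbitrary α, by simp⟩
  by_cases hτ : ∀ τ ∈ B, τ = σ
  · exact ⟨Classical.arbitrary α, _, fun π hπ => by rw [hτ π hπ]⟩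
  obtain ⟨τ, hτ, hτσ⟩ : ∃ τ ∈ B, τ ≠ σ := by simpa using hτ
  obtain ⟨i, hi⟩ := hB σ hσ τ hτ
  have hB2 : {σ, τ} = B := eq_of_subset_of_card_le (insert_subset hσ (singleton_subset_iff.2 hτ))
    (by rwa [card_pair hτσ.symm])
  refine ⟨i, σ i, fun π hπ => ?_⟩
  rcases mem_insert.1 (hB2 ▸ hπ) with rfl | hπ
  · rfl
  · rw [mem_singleton.1 hπ, hi]

end Finite

end Equiv.Perm

theorem ekr_perm_uniqueness (n : ℕ) (hn : 2 ≤ n)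
    (F : Finset (Equiv.Perm (Fin n)))
    (hint : ∀ σ ∈ F, ∀ π ∈ F, ∃ i : Fin n, σ i = π i)
    (hmax : F.card = (n - 1).factorial) :
    ∃ i j : Fin n, F = Finset.univ.filter (fun σ : Equiv.Perm (Fin n) => σ i = j) := by
  have : Nonempty (Fin n) := ⟨⟨0, by omega⟩⟩
  obtain ⟨i, j, hij⟩ : ∃ i j : Fin n, ∀ σ ∈ F, σ i = j := by
    rcases le_or_gt 4 n with h4 | h3
    · exact Equiv.Perm.IsIntersecting.exists_forall_apply_eq (by simpa) hint (by simpa)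
    · refine Equiv.Perm.IsIntersecting.exists_forall_apply_eq_of_card_le_two hint ?_
      rw [hmax]
      interval_cases n <;> decide
  refine ⟨i, j, eq_of_subset_of_card_le (fun σ hσ => mem_filter.2 ⟨mem_univ _, hij σ hσ⟩) ?_⟩
  rw [hmax]
  simpa using (Equiv.Perm.isIntersecting_filter_apply_eq i j).card_le
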